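/- arXiv:1108.3198 — 2 statements merged into one kernel-verified Lean document; each statement's English description precedes it below -/
import Mathlib

section
/- Let c be a nonnegative integer, p a prime with p > c, and D ⊆ ℤ/pℤ a subset of cardinality n = p − c. Let b ∈ ℤ/pℤ and let k be a positive integer with k ≤ p − 1. Let N be the number of k-tuples (x_1,…,x_k) ∈ D^k with pairwise distinct coordinates such that x_1 + ⋯ + x_k = b. Then N/k! ≥ (1/p)·C(p−c, k) − C(c+k−1, k), i.e. N ≥ (p−c)(p−c−1)⋯(p−c−k+1)/p − (c+k−1)(c+k−2)⋯c. -/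
/-!
Detect the condition `x₁ + ⋯ + xₖ = b` with the additive characters of `ℤ/pℤ`. The trivial
character contributes the number `(p - c)(p - c - 1)⋯(p - c - k + 1)` of all injective tuples in
`Dᵏ`; for a nontrivial `ψ`, the character sum over injective tuples is `k!` times the elementary
symmetric function `eₖ` of the values `ψ(a)`, `a ∈ D`. Its power sums are
`∑_{a ∈ D} ψ(a)ʲ = -∑_{a ∉ D} (jψ)(a)`, of modulus at most `c` as long as `jψ` is nontrivial,
i.e. for `j < p`, and Newton's identities turn these bounds into `|eₖ| ≤ C(c + k - 1, k)`.
-/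

open Finset Function
open scoped Nat

theorem Nat.mul_sum_range_choose (c m : ℕ) :
    c * ∑ i ∈ range m, (c + i - 1).choose i = m * (c + m - 1).choose m := by
  induction m with
  | zero => simp
  | succ m ih =>
    rw [sum_range_succ, mul_add, ih, ← add_mul]
    obtain ⟨rfl, rfl⟩ | h : c = 0 ∧ m = 0 ∨ 0 < c + m := by omega
    · simp
    · have := Nat.add_one_mul_choose_eq (c + m - 1) m
      rw [Nat.sub_add_cancel h] at this
      rw [show c + (m + 1) - 1 = c + m by omega, add_comm m c, this, mul_comm]

theorem factorial_mul_choose_le_prod_range_add {n c : ℕ} (h : n ≤ c) (k : ℕ) :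
    (k ! * (n + k - 1).choose k : ℝ) ≤ ∏ j ∈ Finset.range k, ((c : ℝ) + j) := by
  have hasc : ∏ j ∈ Finset.range k, ((c : ℝ) + j) = (k ! * (c + k - 1).choose k : ℕ) := by
    rw [← Nat.ascFactorial_eq_factorial_mul_choose', Nat.ascFactorial_eq_prod_range]
    push_cast
    rfl
  rw [hasc]
  exact_mod_cast Nat.mul_le_mul_left _ (Nat.choose_le_choose k (by omega))

theorem Multiset.mul_esymm_eq_sum {R : Type*} [CommRing R] (t : Multiset R) (m : ℕ) :
    m * t.esymm m = (-1) ^ (m + 1) *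
      ∑ i ∈ Finset.range m, (-1) ^ i * t.esymm i * (t.map (· ^ (m - i))).sum := by
  classical
  set ev := MvPolynomial.aeval (R := R) (σ := t.ToType) (fun x => (x : R)) with hev
  have ev_esymm (i : ℕ) : ev (MvPolynomial.esymm t.ToType R i) = t.esymm i := by
    rw [MvPolynomial.aeval_esymm_eq_multiset_esymm, Multiset.map_univ_coe]
  have ev_psum (j : ℕ) : ev (MvPolynomial.psum t.ToType R j) = (t.map (· ^ j)).sum := by
    rw [MvPolynomial.psum, map_sum, Finset.sum_eq_multiset_sum]
    simp only [hev, map_pow, MvPolynomial.aeval_X]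
    exact congrArg Multiset.sum (Multiset.map_univ_comp_coe t (· ^ j))
  have newton := congrArg ev (MvPolynomial.mul_esymm_eq_sum t.ToType R m)
  rw [Finset.sum_filter, Finset.Nat.sum_antidiagonal_eq_sum_range_succ (fun i j => if i < m then
      (-1) ^ i * MvPolynomial.esymm t.ToType R i * MvPolynomial.psum t.ToType R j else 0),
    sum_range_succ, if_neg (lt_irrefl m), add_zero, ← sum_filter,
    filter_true_of_mem fun i => mem_range.1] at newton
  simpa only [map_mul, map_natCast, map_pow, map_neg, map_one, map_sum, ev_esymm, ev_psum]
    using newton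

theorem Multiset.norm_esymm_le_choose {𝕜 : Type*} [RCLike 𝕜] (t : Multiset 𝕜) {c m : ℕ}
    (hpow : ∀ j, 1 ≤ j → j ≤ m → ‖(t.map (· ^ j)).sum‖ ≤ c) :
    ‖t.esymm m‖ ≤ (c + m - 1).choose m := by
  induction m using Nat.strong_induction_on with
  | _ m ih =>
  obtain rfl | hm := Nat.eq_zero_or_pos m
  · simp [Multiset.esymm, Multiset.powersetCard_zero_left]
  have hterm (i : ℕ) (hi : i ∈ Finset.range m) :
      ‖(-1) ^ i * t.esymm i * (t.map (· ^ (m - i))).sum‖ ≤ (c + i - 1).choose i * c := by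
    have hi : i < m := mem_range.1 hi
    rw [norm_mul, norm_mul, norm_pow, norm_neg, norm_one, one_pow, one_mul]
    exact mul_le_mul (ih i hi fun j hj hji => hpow j hj (by omega)) (hpow _ (by omega) (by omega))
      (norm_nonneg _) (Nat.cast_nonneg _)
  have : (m : ℝ) * ‖t.esymm m‖ ≤ m * (c + m - 1).choose m :=
    calc (m : ℝ) * ‖t.esymm m‖ = ‖(m : 𝕜) * t.esymm m‖ := by rw [norm_mul, RCLike.norm_natCast]
      _ ≤ ∑ i ∈ Finset.range m, ((c + i - 1).choose i * c : ℝ) := by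
        rw [Multiset.mul_esymm_eq_sum, norm_mul, norm_pow, norm_neg, norm_one, one_pow, one_mul]
        exact (norm_sum_le _ _).trans (sum_le_sum hterm)
      _ = m * (c + m - 1).choose m := by
        rw [← sum_mul, mul_comm]
        exact_mod_cast Nat.mul_sum_range_choose c m
  exact le_of_mul_le_mul_left this (by exact_mod_cast hm)

section InjectiveTuples

variable {α : Type*} [Fintype α] [DecidableEq α]

def injectiveTuples (s : Finset α) (k : ℕ) : Finset (Fin k → α) :=
  {x | (∀ i, x i ∈ s) ∧ Injective x}

@[simp]
theorem mem_injectiveTuples {s : Finset α} {k : ℕ} {x : Fin k → α} :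
    x ∈ injectiveTuples s k ↔ (∀ i, x i ∈ s) ∧ Injective x := by
  simp [injectiveTuples]

theorem card_injectiveTuples (s : Finset α) (k : ℕ) :
    #(injectiveTuples s k) = (#s).descFactorial k := by
  calc #(injectiveTuples s k) = Fintype.card (Fin k ↪ s) := by
        refine card_bij' (fun x hx => ⟨fun i => ⟨x i, (mem_injectiveTuples.1 hx).1 i⟩,
            fun i j h => (mem_injectiveTuples.1 hx).2 (congrArg Subtype.val h)⟩)
          (fun e _ => fun i => (e i : α)) (by simp)
          (fun e _ => mem_injectiveTuples.2
            ⟨fun i => (e i).2, Subtype.val_injective.comp e.injective⟩)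
          (fun _ _ => rfl) (fun _ _ => rfl)
    _ = (#s).descFactorial k := by simp [Fintype.card_embedding_eq]

theorem image_mem_powersetCard_of_mem_injectiveTuples {s : Finset α} {k : ℕ} {x : Fin k → α}
    (hx : x ∈ injectiveTuples s k) : univ.image x ∈ s.powersetCard k := by
  obtain ⟨hxs, hx⟩ := mem_injectiveTuples.1 hx
  rw [mem_powersetCard, card_image_of_injective _ hx, card_univ, Fintype.card_fin]
  exact ⟨by simpa [image_subset_iff] using hxs, rfl⟩

theorem filter_image_eq_injectiveTuples {s S : Finset α} {k : ℕ} (hS : S ∈ s.powersetCard k) :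
    {x ∈ injectiveTuples s k | univ.image x = S} = injectiveTuples S k := by
  obtain ⟨hSs, hS⟩ := mem_powersetCard.1 hS
  ext x
  simp only [mem_filter, mem_injectiveTuples]
  constructor
  · rintro ⟨⟨-, hx⟩, rfl⟩
    exact ⟨fun i => mem_image_of_mem x (mem_univ i), hx⟩
  · rintro ⟨hxS, hx⟩
    refine ⟨⟨fun i => hSs (hxS i), hx⟩, eq_of_subset_of_card_le ?_ ?_⟩
    · simpa [image_subset_iff] using hxS
    · rw [card_image_of_injective _ hx, card_univ, Fintype.card_fin, hS]

theorem sum_injectiveTuples_prod {R : Type*} [CommSemiring R] (s : Finset α) (g : α → R)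
    (k : ℕ) :
    ∑ x ∈ injectiveTuples s k, ∏ i, g (x i) = k ! * ∑ S ∈ s.powersetCard k, ∏ a ∈ S, g a := by
  rw [← sum_fiberwise_of_maps_to fun _ => image_mem_powersetCard_of_mem_injectiveTuples, mul_sum]
  refine sum_congr rfl fun S hS => ?_
  calc ∑ x ∈ injectiveTuples s k with univ.image x = S, ∏ i, g (x i)
      = ∑ x ∈ injectiveTuples s k with univ.image x = S, ∏ a ∈ S, g a := by
        refine sum_congr rfl fun x hx => ?_
        obtain ⟨hxs, rfl⟩ := mem_filter.1 hx
        rw [prod_image (mem_injectiveTuples.1 hxs).2.injOn]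
    _ = k ! * ∏ a ∈ S, g a := by
        rw [sum_const, filter_image_eq_injectiveTuples hS, card_injectiveTuples,
          (mem_powersetCard.1 hS).2, Nat.descFactorial_self, nsmul_eq_mul]

end InjectiveTuples

theorem AddChar.map_sum_eq_prod {ι A M : Type*} [AddCommMonoid A] [CommMonoid M]
    (ψ : AddChar A M) (s : Finset ι) (f : ι → A) : ψ (∑ i ∈ s, f i) = ∏ i ∈ s, ψ (f i) := by
  induction s using Finset.cons_induction with
  | empty => simp
  | cons a s ha ih => rw [sum_cons, prod_cons, AddChar.map_add_eq_mul, ih]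

theorem AddChar.nsmul_ne_zero_of_coprime {G M : Type*} [AddCommGroup G] [CommMonoid M]
    {ψ : AddChar G M} (hψ : ψ ≠ 0) {j : ℕ} (hj : (Nat.card G).Coprime j) : j • ψ ≠ 0 := by
  intro hjψ
  refine hψ ?_
  ext a
  obtain ⟨a, rfl⟩ := (nsmulCoprime hj).surjective a
  rw [nsmulCoprime_apply, AddChar.map_nsmul_eq_pow, ← AddChar.nsmul_apply, hjψ]
  rfl

section FiniteGroup

variable {G : Type*} [AddCommGroup G] [Fintype G]

theorem AddChar.norm_sum_le_card_compl {K : Type*} [NormedField K] [DecidableEq G]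
    {ψ : AddChar G K} (hψ : ψ ≠ 0) (D : Finset G) : ‖∑ a ∈ D, ψ a‖ ≤ #Dᶜ := by
  classical
  have hsum : ∑ a ∈ D, ψ a = -∑ a ∈ Dᶜ, ψ a := by
    rw [eq_neg_iff_add_eq_zero, sum_add_sum_compl, AddChar.sum_eq_ite, if_neg hψ]
  rw [hsum, norm_neg]
  calc ‖∑ a ∈ Dᶜ, ψ a‖ ≤ ∑ a ∈ Dᶜ, ‖ψ a‖ := norm_sum_le _ _
    _ = #Dᶜ := by simp

theorem card_sub_le_card_mul_card_filter_eq [DecidableEq G] {ι : Type*} (A : Finset ι)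
    (f : ι → G) (b : G) {B : ℝ}
    (hB : ∀ ψ : AddChar G ℂ, ψ ≠ 0 → ‖∑ x ∈ A, ψ (f x)‖ ≤ B) :
    (#A : ℝ) - (Fintype.card G - 1) * B ≤ Fintype.card G * #{x ∈ A | f x = b} := by
  set F : AddChar G ℂ → ℂ := fun ψ => ∑ x ∈ A, ψ (f x - b)
  have hcount : (Fintype.card G : ℂ) * #{x ∈ A | f x = b} = #A + ∑ ψ ∈ univ.erase 0, F ψ := by
    have : ∑ ψ, F ψ = Fintype.card G * #{x ∈ A | f x = b} := by
      simp only [F]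
      rw [sum_comm]
      simp_rw [AddChar.sum_apply_eq_ite, sub_eq_zero]
      rw [← sum_filter, sum_const, nsmul_eq_mul, mul_comm]
    rw [← this, ← add_sum_erase _ _ (mem_univ 0)]
    simp [F]
  have hrest : ‖∑ ψ ∈ univ.erase 0, F ψ‖ ≤ (Fintype.card G - 1) * B := by
    refine (norm_sum_le _ _).trans ?_
    calc ∑ ψ ∈ univ.erase 0, ‖F ψ‖ ≤ ∑ ψ ∈ (univ : Finset (AddChar G ℂ)).erase 0, B := by
          refine sum_le_sum fun ψ hψ => ?_
          simp_rw [F, AddChar.map_sub_eq_div, div_eq_mul_inv, ← sum_mul, norm_mul, norm_inv,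
            AddChar.norm_apply, inv_one, mul_one]
          exact hB ψ (ne_of_mem_erase hψ)
      _ = (Fintype.card G - 1) * B := by
          rw [sum_const, card_erase_of_mem (mem_univ 0), card_univ, AddChar.card_eq, nsmul_eq_mul,
            Nat.cast_pred Fintype.card_pos]
  have hreal : ((Fintype.card G * #{x ∈ A | f x = b} - #A : ℝ) : ℂ) =
      ∑ ψ ∈ univ.erase 0, F ψ := by
    push_cast
    rw [hcount]
    ring
  rw [← hreal, Complex.norm_real, Real.norm_eq_abs] at hrest
  linarith [neg_abs_le ((Fintype.card G * #{x ∈ A | f x = b} - #A : ℝ))]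

theorem norm_sum_injectiveTuples_addChar_le [DecidableEq G] {ψ : AddChar G ℂ} (hψ : ψ ≠ 0)
    (D : Finset G) {k : ℕ} (hk : ∀ j, 1 ≤ j → j ≤ k → (Nat.card G).Coprime j) :
    ‖∑ x ∈ injectiveTuples D k, ψ (∑ i, x i)‖ ≤ k ! * (#Dᶜ + k - 1).choose k := by
  simp_rw [AddChar.map_sum_eq_prod]
  rw [sum_injectiveTuples_prod, ← esymm_map_val, norm_mul, Complex.norm_natCast]
  gcongr
  refine Multiset.norm_esymm_le_choose _ fun j hj hjk => ?_
  have hpow : ((D.val.map ψ).map (· ^ j)).sum = ∑ a ∈ D, (j • ψ) a := by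
    simp only [Multiset.map_map, AddChar.nsmul_apply]
    rfl
  rw [hpow]
  exact AddChar.norm_sum_le_card_compl (AddChar.nsmul_ne_zero_of_coprime hψ (hk j hj hjk)) D

theorem descFactorial_sub_le_card_mul_card_injectiveTuples_sum_eq [DecidableEq G]
    (D : Finset G) (b : G) {k : ℕ} (hk : ∀ j, 1 ≤ j → j ≤ k → (Nat.card G).Coprime j) :
    ((#D).descFactorial k : ℝ) - (Fintype.card G - 1) * (k ! * (#Dᶜ + k - 1).choose k) ≤
      Fintype.card G * #{x ∈ injectiveTuples D k | ∑ i, x i = b} := by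
  rw [← card_injectiveTuples]
  exact card_sub_le_card_mul_card_filter_eq _ _ b
    fun ψ hψ => norm_sum_injectiveTuples_addChar_le hψ D hk

end FiniteGroup

theorem card_distinct_tuples_sum_eq_ge_of_card_eq_general {c p : ℕ} [hp : Fact p.Prime]
    (D : Finset (ZMod p)) (hD : D.card = p - c)
    (b : ZMod p) {k : ℕ} (hkp : k ≤ p - 1) :
    ((Finset.univ.filter (fun x : Fin k → ZMod p =>
        (∀ i, x i ∈ D) ∧ Function.Injective x ∧ ∑ i, x i = b)).card : ℝ) ≥
      (Nat.descFactorial (p - c) k : ℝ) / p -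
        ∏ j ∈ Finset.range k, ((c : ℝ) + j) := by
  have hcoprime : ∀ j, 1 ≤ j → j ≤ k → (Nat.card (ZMod p)).Coprime j := fun j hj hjk => by
    rw [Nat.card_zmod]
    exact Nat.coprime_of_lt_prime (by omega) (by omega) hp.out
  have hfilter : univ.filter (fun x : Fin k → ZMod p =>
      (∀ i, x i ∈ D) ∧ Function.Injective x ∧ ∑ i, x i = b) =
      {x ∈ injectiveTuples D k | ∑ i, x i = b} := by
    ext x
    simp [and_assoc]
  have hcount := descFactorial_sub_le_card_mul_card_injectiveTuples_sum_eq D b hcoprime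
  rw [ZMod.card, hD, ← hfilter] at hcount
  have hchoose := factorial_mul_choose_le_prod_range_add
    (by rw [card_compl, ZMod.card, hD]; omega : #Dᶜ ≤ c) k
  have hp0 : (0 : ℝ) < p := by exact_mod_cast hp.out.pos
  rw [ge_iff_le, sub_le_iff_le_add, div_le_iff₀ hp0]
  nlinarith

/-- Let `c ≥ 0`, `p > c` a prime and `D ⊆ ℤ/pℤ` with `|D| = p - c`.  If `N` is the
number of `k`-tuples of pairwise distinct elements of `D` summing to `b`, then
`N ≥ (p-c)(p-c-1)⋯(p-c-k+1)/p - (c+k-1)(c+k-2)⋯c`; equivalently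
`N/k! ≥ (1/p)·C(p-c, k) - C(c+k-1, k)`. -/
theorem card_distinct_tuples_sum_eq_ge_of_card_eq {c p : ℕ} [hp : Fact p.Prime]
    (hcp : c < p) (D : Finset (ZMod p)) (hD : D.card = p - c)
    (b : ZMod p) {k : ℕ} (hk : 0 < k) (hkp : k ≤ p - 1) :
    ((Finset.univ.filter (fun x : Fin k → ZMod p =>
        (∀ i, x i ∈ D) ∧ Function.Injective x ∧ ∑ i, x i = b)).card : ℝ) ≥
      (Nat.descFactorial (p - c) k : ℝ) / p -
        ∏ j ∈ Finset.range k, ((c : ℝ) + j) :=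
  card_distinct_tuples_sum_eq_ge_of_card_eq_general (hp := hp) D hD b hkp
end

section
/- Let ε > 0 and A > 0. There exist constants c_1 > 0, c_2 > 0 and P such that for every prime p ≥ P and every subset D ⊆ ℤ/pℤ with n = |D| ≥ (log p)^{1+ε} whose Fourier bias satisfies Φ(D) ≤ A·√(n · log p), and for every integer k with c_1 · (log p)/(log log p) ≤ k ≤ c_2 · n, every element b ∈ ℤ/pℤ can be written as a sum of k pairwise distinct elements of D. -/
/-
Counting with additive characters, the number `N` of `k`-subsets of `D` with sum `b` satisfies
`p N = C(n, k) + ∑_{χ ≠ 1} χ(-b) e_k(χ(a) : a ∈ D)`, where `e_k` is the `k`-th elementary symmetric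
function. For `1 ≤ j < p` the power sum `∑_{a ∈ D} χ(a)^j` is the character sum of `D` at the
nontrivial character `a ↦ χ(j a)`, hence bounded by `Φ = Φ(D)`, and Newton's identities then give
`|e_k| ≤ Φ(Φ+1)⋯(Φ+k-1)/k! ≤ (Φ+k)^k/k!`. As `(n-k)^k ≤ k! C(n, k)`, it remains to check
`p (Φ+k)^k < (n-k)^k`. Write `p = e^L` and `t = L^{ε/4}`: smoothness gives `Φ ≤ n/(400 t)`, and
either `k ≤ n/(400 t)`, where `(Φ+k) t ≤ n - k` and `t^k > e^L` by the lower bound on `k`,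
or `k > L`, where `(Φ+k) e ≤ n - k` and `e^k > e^L`.
-/

open Finset

/-- The Fourier bias of a subset `D ⊆ ℤ/pℤ`:
`Φ(D) = max_{χ ≠ 1} |Σ_{a ∈ D} χ(a)|`, the maximum over nontrivial additive
characters of the absolute value of the character sum over `D`. -/
noncomputable def fourierBias {p : ℕ} (D : Finset (ZMod p)) : ℝ :=
  sSup {r : ℝ | ∃ χ : AddChar (ZMod p) ℂ, χ ≠ 1 ∧ r = ‖∑ a ∈ D, χ a‖}

open Real
open scoped Nat

lemma ascPochhammer_eval_nonneg {S : Type*} [Semiring S] [PartialOrder S] [IsOrderedRing S]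
    {s : S} (hs : 0 ≤ s) (n : ℕ) : 0 ≤ (ascPochhammer S n).eval s := by
  induction n with
  | zero => simp
  | succ n ih => rw [ascPochhammer_succ_eval]; exact mul_nonneg ih (add_nonneg hs n.cast_nonneg)

lemma ascPochhammer_eval_le_pow {S : Type*} [Semiring S] [PartialOrder S] [IsOrderedRing S]
    {s : S} (hs : 0 ≤ s) (n : ℕ) : (ascPochhammer S n).eval s ≤ (s + n) ^ n := by
  induction n with
  | zero => simp
  | succ n ih =>
    rw [ascPochhammer_succ_eval, pow_succ, Nat.cast_succ]
    have hsn₀ : 0 ≤ s + n := add_nonneg hs n.cast_nonneg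
    have hsn : s + n ≤ s + (n + 1) := by gcongr; exact le_add_of_nonneg_right zero_le_one
    exact mul_le_mul (ih.trans (pow_le_pow_left₀ hsn₀ hsn n)) hsn hsn₀
      (pow_nonneg (hsn₀.trans hsn) n)

lemma mul_sum_ascPochhammer_div_factorial {K : Type*} [Field K] [CharZero K] (x : K) (m : ℕ) :
    x * ∑ i ∈ range m, (ascPochhammer K i).eval x / i ! =
      m * ((ascPochhammer K m).eval x / m !) := by
  induction m with
  | zero => simp
  | succ m ih =>
    rw [sum_range_succ, mul_add, ih, ascPochhammer_succ_eval, Nat.factorial_succ]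
    push_cast
    field_simp
    ring

open MvPolynomial in
lemma norm_aeval_esymm_le {σ 𝕜 : Type*} [Fintype σ] [RCLike 𝕜] (x : σ → 𝕜) {Φ : ℝ}
    (hΦ : 0 ≤ Φ) {K : ℕ} (hpsum : ∀ j, 1 ≤ j → j ≤ K → ‖aeval x (psum σ 𝕜 j)‖ ≤ Φ)
    {m : ℕ} (hm : m ≤ K) :
    ‖aeval x (esymm σ 𝕜 m)‖ ≤ (ascPochhammer ℝ m).eval Φ / m ! := by
  induction m using Nat.strong_induction_on with
  | _ m ih =>
  rcases m.eq_zero_or_pos with rfl | hm₀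
  · simp
  have newton := congrArg (aeval x) (mul_esymm_eq_sum σ 𝕜 m)
  simp only [map_mul, map_pow, map_neg, map_one, map_natCast, map_sum] at newton
  have key : (m : ℝ) * ‖aeval x (esymm σ 𝕜 m)‖ ≤ m * ((ascPochhammer ℝ m).eval Φ / m !) := calc
    (m : ℝ) * ‖aeval x (esymm σ 𝕜 m)‖ = ‖∑ a ∈ antidiagonal m with a.1 < m,
        (-1) ^ a.1 * aeval x (esymm σ 𝕜 a.1) * aeval x (psum σ 𝕜 a.2)‖ := by
      rw [← RCLike.norm_natCast (K := 𝕜) m, ← norm_mul, newton, norm_mul, norm_pow, norm_neg,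
        norm_one, one_pow, one_mul]
    _ ≤ ∑ a ∈ antidiagonal m with a.1 < m, (ascPochhammer ℝ a.1).eval Φ / a.1 ! * Φ := by
      refine (norm_sum_le _ _).trans (sum_le_sum fun a ha => ?_)
      rw [mem_filter, HasAntidiagonal.mem_antidiagonal] at ha
      rw [norm_mul, norm_mul, norm_pow, norm_neg, norm_one, one_pow, one_mul]
      exact mul_le_mul (ih a.1 ha.2 (by omega)) (hpsum a.2 (by omega) (by omega))
        (norm_nonneg _) (div_nonneg (ascPochhammer_eval_nonneg hΦ _) (by positivity))
    _ = Φ * ∑ i ∈ range m, (ascPochhammer ℝ i).eval Φ / i ! := by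
      rw [sum_filter, Nat.sum_antidiagonal_eq_sum_range_succ_mk, sum_range_succ,
        if_neg (lt_irrefl m), add_zero, mul_sum]
      exact sum_congr rfl fun i hi => by rw [if_pos (mem_range.mp hi), mul_comm]
    _ = _ := mul_sum_ascPochhammer_div_factorial Φ m
  exact le_of_mul_le_mul_left key (by exact_mod_cast hm₀)

lemma AddChar.map_finset_sum {A M ι : Type*} [AddCommMonoid A] [CommMonoid M] (χ : AddChar A M)
    (s : Finset ι) (f : ι → A) : χ (∑ i ∈ s, f i) = ∏ i ∈ s, χ (f i) := by
  induction s using Finset.cons_induction with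
  | empty => simp
  | cons a s ha ih => rw [sum_cons, prod_cons, map_add_eq_mul, ih]

lemma sum_powersetCard_addChar_eq_esymm {A M : Type*} [AddCommMonoid A] [CommSemiring M]
    (χ : AddChar A M) (D : Finset A) (k : ℕ) :
    ∑ S ∈ powersetCard k D, χ (S.sum id) = (D.val.map χ).esymm k := by
  rw [Finset.esymm_map_val]
  exact sum_congr rfl fun S _ => χ.map_finset_sum S id

section
variable {G : Type*} [AddCommGroup G] [Fintype G] [DecidableEq G]

lemma card_mul_card_filter_sum_eq (D : Finset G) (k : ℕ) (b : G) :
    (Fintype.card G : ℂ) * #{S ∈ powersetCard k D | S.sum id = b} =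
      ∑ χ : AddChar G ℂ, χ (-b) * ∑ S ∈ powersetCard k D, χ (S.sum id) := by
  simp_rw [mul_sum, ← AddChar.map_add_eq_mul, neg_add_eq_sub]
  rw [sum_comm]
  simp_rw [AddChar.sum_apply_eq_ite, sub_eq_zero]
  rw [← sum_filter, sum_const, nsmul_eq_mul, mul_comm]

lemma exists_subset_card_sum_eq_of_norm_le {D : Finset G} {k : ℕ} {B : ℝ} (hB₀ : 0 ≤ B)
    (hB : ∀ χ : AddChar G ℂ, χ ≠ 1 → ‖∑ S ∈ powersetCard k D, χ (S.sum id)‖ ≤ B)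
    (hcard : Fintype.card G * B < D.card.choose k) (b : G) :
    ∃ S ⊆ D, S.card = k ∧ S.sum id = b := by
  suffices h : #{S ∈ powersetCard k D | S.sum id = b} ≠ 0 by
    obtain ⟨S, hS⟩ := card_ne_zero.mp h
    simp only [mem_filter, mem_powersetCard] at hS
    exact ⟨S, hS.1.1, hS.1.2, hS.2⟩
  intro h₀
  have hsum := card_mul_card_filter_sum_eq D k b
  rw [h₀, Nat.cast_zero, mul_zero, ← add_sum_erase _ _ (mem_univ 1)] at hsum
  have htrivial : (1 : AddChar G ℂ) (-b) * ∑ S ∈ powersetCard k D, (1 : AddChar G ℂ) (S.sum id) =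
      D.card.choose k := by simp
  rw [htrivial] at hsum
  have hchoose : (D.card.choose k : ℝ) ≤ Fintype.card G * B := calc
    (D.card.choose k : ℝ)
        = ‖∑ χ ∈ univ.erase 1, χ (-b) * ∑ S ∈ powersetCard k D, χ (S.sum id)‖ := by
      rw [← norm_neg, ← eq_neg_of_add_eq_zero_left hsum.symm, Complex.norm_natCast]
    _ ≤ ∑ χ ∈ univ.erase (1 : AddChar G ℂ), B := norm_sum_le_of_le _ fun χ hχ => by
      rw [norm_mul, AddChar.norm_apply, one_mul]
      exact hB χ (ne_of_mem_erase hχ)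
    _ ≤ Fintype.card G * B := by
      rw [sum_const, nsmul_eq_mul, card_erase_of_mem (mem_univ _), Finset.card_univ,
        AddChar.card_eq]
      gcongr
      simp
  linarith
end

section
variable {p : ℕ}

lemma norm_sum_le_fourierBias [NeZero p] (D : Finset (ZMod p)) {χ : AddChar (ZMod p) ℂ}
    (hχ : χ ≠ 1) : ‖∑ a ∈ D, χ a‖ ≤ fourierBias D :=
  le_csSup ⟨D.card, by rintro r ⟨ψ, -, rfl⟩; exact (norm_sum_le _ _).trans (by simp)⟩ ⟨χ, hχ, rfl⟩

variable [Fact p.Prime]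

lemma fourierBias_nonneg (D : Finset (ZMod p)) : 0 ≤ fourierBias D := by
  obtain ⟨χ, hχ⟩ : ∃ χ : AddChar (ZMod p) ℂ, χ ≠ 1 := Fintype.exists_ne_of_one_lt_card
    (by rw [AddChar.card_eq, ZMod.card]; exact (Fact.out : p.Prime).one_lt) 1
  exact (norm_nonneg _).trans (norm_sum_le_fourierBias D hχ)

lemma norm_sum_pow_le_fourierBias (D : Finset (ZMod p)) {χ : AddChar (ZMod p) ℂ} (hχ : χ ≠ 1)
    {j : ℕ} (hj : (j : ZMod p) ≠ 0) : ‖∑ a ∈ D, χ a ^ j‖ ≤ fourierBias D := by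
  simp_rw [← AddChar.mulShift_spec']
  exact norm_sum_le_fourierBias D (AddChar.IsPrimitive.of_ne_one hχ hj)

lemma norm_sum_powersetCard_addChar_le (D : Finset (ZMod p)) {χ : AddChar (ZMod p) ℂ}
    (hχ : χ ≠ 1) {k : ℕ} (hk : k < p) :
    ‖∑ S ∈ powersetCard k D, χ (S.sum id)‖ ≤ (ascPochhammer ℝ k).eval (fourierBias D) / k ! := by
  have hD : (univ : Finset D).val.map (χ ∘ Subtype.val) = D.val.map χ := by
    rw [univ_eq_attach, attach_val]; exact Multiset.attach_map_val' D.val χ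
  rw [sum_powersetCard_addChar_eq_esymm, ← hD, ← MvPolynomial.aeval_esymm_eq_multiset_esymm D ℂ]
  refine norm_aeval_esymm_le _ (fourierBias_nonneg D) (fun j hj₁ hjk => ?_) le_rfl
  have hj : (j : ZMod p) ≠ 0 := by
    rw [Ne, ZMod.natCast_eq_zero_iff]
    exact Nat.not_dvd_of_pos_of_lt hj₁ (by omega)
  simpa [MvPolynomial.psum, sum_attach D (fun a => χ a ^ j)] using
    norm_sum_pow_le_fourierBias D hχ hj
end

lemma exp_mul_add_pow_lt_sub_pow {L t n Φ : ℝ} {k : ℕ} (hL : 0 < L) (ht : 1 ≤ t)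
    (hn : 400 * L * t ≤ n) (hΦ₀ : 0 ≤ Φ) (hΦ : Φ ≤ n / (400 * t)) (hk : L < k * log t)
    (hkn : k ≤ n / 200) :
    exp L * (Φ + k) ^ k < (n - k) ^ k := by
  have hk₀ : 0 < (k : ℝ) := by
    rcases k.eq_zero_or_pos with rfl | hk₀
    · simp at hk; linarith
    · exact_mod_cast hk₀
  have hn₀ : 0 < n := by nlinarith
  have hΦn : Φ ≤ n / 400 := hΦ.trans (div_le_div_of_nonneg_left hn₀.le (by norm_num) (by linarith))
  suffices ∃ W, 0 ≤ W ∧ exp L < W ^ k ∧ (Φ + k) * W ≤ n - k by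
    obtain ⟨W, hW₀, hWL, hW⟩ := this
    calc exp L * (Φ + k) ^ k < W ^ k * (Φ + k) ^ k := by gcongr
      _ = ((Φ + k) * W) ^ k := by rw [mul_pow, mul_comm]
      _ ≤ (n - k) ^ k := by gcongr
  rcases le_or_gt (k : ℝ) (n / (400 * t)) with hsmall | hlarge
  · refine ⟨t, by linarith, ?_, ?_⟩
    · calc exp L < exp (k * log t) := exp_lt_exp.mpr hk
        _ = t ^ k := by rw [exp_nat_mul, exp_log (by linarith)]
    · have h2 : 2 * (n / (400 * t)) * t = n / 200 := by field_simp; ring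
      nlinarith
  · refine ⟨exp 1, (exp_pos 1).le, ?_, ?_⟩
    · have hLk : L < k := lt_of_le_of_lt ((le_div_iff₀ (by positivity)).mpr (by linarith)) hlarge
      rw [exp_one_pow]
      exact exp_lt_exp.mpr hLk
    · have he : exp 1 ≤ 3 := (exp_one_lt_d9).le.trans (by norm_num)
      nlinarith [exp_pos 1]

lemma mul_sqrt_mul_le_div {A L n t : ℝ} (hA : 0 ≤ A) (hL : 0 ≤ L) (ht : 400 * (A + 1) ≤ t)
    (hn : L * t ^ 4 ≤ n) : A * √(n * L) ≤ n / (400 * t) := by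
  have ht₀ : 0 < t := by linarith
  have hn₀ : 0 ≤ n := (by positivity : 0 ≤ L * t ^ 4).trans hn
  have hsqrt : √(n * L) ≤ n / t ^ 2 := by
    rw [sqrt_le_iff]
    refine ⟨by positivity, ?_⟩
    rw [div_pow, ← pow_mul, le_div_iff₀ (by positivity)]
    calc n * L * t ^ (2 * 2) = n * (L * t ^ 4) := by ring
      _ ≤ n * n := mul_le_mul_of_nonneg_left hn hn₀
      _ = n ^ 2 := (sq n).symm
  calc A * √(n * L) ≤ A * (n / t ^ 2) := by gcongr
    _ ≤ n / (400 * t) := by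
      rw [mul_div_assoc', div_le_div_iff₀ (by positivity) (by positivity)]
      nlinarith [mul_le_mul_of_nonneg_right (by linarith : 400 * A ≤ t) (by positivity : 0 ≤ n * t)]

lemma exp_mul_add_pow_lt_sub_pow_of_rpow {ε A L n Φ : ℝ} {k : ℕ} (hε : 0 < ε) (hA : 0 ≤ A)
    (hLA : (400 * (A + 1)) ^ (4 / ε) ≤ L) (hn : L ^ (1 + ε) ≤ n) (hΦ₀ : 0 ≤ Φ)
    (hΦ : Φ ≤ A * √(n * L)) (hk : 8 / ε * L / log L ≤ k) (hkn : k ≤ n / 200) :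
    exp L * (Φ + k) ^ k < (n - k) ^ k := by
  have hL₁ : 1 < L := (one_lt_rpow (by linarith) (by positivity)).trans_le hLA
  have hL₀ : 0 < L := by linarith
  set t := L ^ (ε / 4)
  have ht : 400 * (A + 1) ≤ t := calc
    400 * (A + 1) = ((400 * (A + 1)) ^ (4 / ε)) ^ (ε / 4) := by
      rw [← rpow_mul (by positivity), show 4 / ε * (ε / 4) = 1 by field_simp, rpow_one]
    _ ≤ t := rpow_le_rpow (by positivity) hLA (by positivity)
  have hLt : L * t ^ 4 ≤ n := by
    rw [← rpow_natCast, ← rpow_mul hL₀.le, ← rpow_one_add' hL₀.le (by positivity)]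
    convert hn using 2
    push_cast
    ring
  have hlog : L < k * log t := by
    rw [log_rpow hL₀]
    have hlogL : 0 < log L := log_pos hL₁
    calc L < 8 / ε * L / log L * (ε / 4 * log L) := by field_simp; linarith
      _ ≤ k * (ε / 4 * log L) := by gcongr
  have ht₁ : 400 ≤ t ^ 3 := by linarith [le_self_pow₀ (by linarith : 1 ≤ t) (by norm_num : 3 ≠ 0)]
  exact exp_mul_add_pow_lt_sub_pow hL₀ (by linarith) (by nlinarith) hΦ₀
    (hΦ.trans (mul_sqrt_mul_le_div hA hL₀.le ht hLt)) hlog hkn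

lemma mul_ascPochhammer_div_factorial_lt_choose {x Φ : ℝ} {n k : ℕ} (hx : 0 ≤ x) (hΦ : 0 ≤ Φ)
    (hk : k ≤ n) (h : x * (Φ + k) ^ k < (n - k) ^ k) :
    x * ((ascPochhammer ℝ k).eval Φ / k !) < n.choose k := by
  have hdesc : ((n : ℝ) - k) ^ k ≤ k ! * n.choose k := by
    rw [← Nat.cast_sub hk]
    exact_mod_cast ((Nat.pow_le_pow_left (by omega : n - k ≤ n + 1 - k) k).trans
      (Nat.pow_sub_le_descFactorial n k)).trans_eq (Nat.descFactorial_eq_factorial_mul_choose n k)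
  rw [mul_div_assoc', div_lt_iff₀ (by positivity)]
  calc x * (ascPochhammer ℝ k).eval Φ ≤ x * (Φ + k) ^ k :=
        mul_le_mul_of_nonneg_left (ascPochhammer_eval_le_pow hΦ k) hx
    _ < (n - k) ^ k := h
    _ ≤ n.choose k * k ! := by linarith

/-- Let `ε > 0` and `A > 0`.  There are constants `c₁, c₂ > 0` and `P` such that
for every prime `p ≥ P`, every `D ⊆ ℤ/pℤ` with `n = |D| ≥ (log p)^{1+ε}` that is
smooth (i.e. `Φ(D) ≤ A √(n log p)`), and every `k` with
`c₁ log p / log log p ≤ k ≤ c₂ n`, every `b ∈ ℤ/pℤ` is a sum of `k` pairwise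
distinct elements of `D`. -/
theorem every_element_is_k_subset_sum (ε A : ℝ) (hε : 0 < ε) (hA : 0 < A) :
    ∃ c₁ > (0 : ℝ), ∃ c₂ > (0 : ℝ), ∃ P : ℕ, ∀ p : ℕ, p.Prime → P ≤ p →
      ∀ D : Finset (ZMod p),
        Real.log p ^ (1 + ε) ≤ (D.card : ℝ) →
        fourierBias D ≤ A * Real.sqrt (D.card * Real.log p) →
        ∀ k : ℕ, c₁ * Real.log p / Real.log (Real.log p) ≤ (k : ℝ) →
          (k : ℝ) ≤ c₂ * D.card →
          ∀ b : ZMod p, ∃ S ⊆ D, S.card = k ∧ S.sum id = b := by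
  refine ⟨8 / ε, by positivity, 1 / 200, by norm_num, ⌈exp ((400 * (A + 1)) ^ (4 / ε))⌉₊, ?_⟩
  intro p hp hP D hn hbias k hk₁ hk₂ b
  have := Fact.mk hp
  have hp₀ : (0 : ℝ) < p := by exact_mod_cast hp.pos
  have hLA : (400 * (A + 1)) ^ (4 / ε) ≤ log p :=
    (le_log_iff_exp_le hp₀).mpr ((Nat.le_ceil _).trans (by exact_mod_cast hP))
  have hΦ₀ := fourierBias_nonneg D
  have hkn : (k : ℝ) ≤ D.card / 200 := by linarith
  have hkD : k < D.card := by
    have hD₀ : (0 : ℝ) < D.card := (rpow_pos_of_pos (hLA.trans_lt' (by positivity)) _).trans_le hn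
    exact_mod_cast (by linarith : (k : ℝ) < D.card)
  have hkp : k < p := hkD.trans_le ((card_le_univ D).trans_eq (ZMod.card p))
  have hmain := exp_mul_add_pow_lt_sub_pow_of_rpow hε hA.le hLA hn hΦ₀ hbias hk₁ hkn
  rw [exp_log hp₀] at hmain
  refine exists_subset_card_sum_eq_of_norm_le
    (div_nonneg (ascPochhammer_eval_nonneg hΦ₀ k) (by positivity))
    (fun χ hχ => norm_sum_powersetCard_addChar_le D hχ hkp) ?_ b
  rw [ZMod.card]
  exact mul_ascPochhammer_div_factorial_lt_choose hp₀.le hΦ₀ hkD.le hmain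
end
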